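/- arXiv:2102.09878 — 2 statements merged into one kernel-verified Lean document; each statement's English description precedes it below -/
import Mathlib

section
/- Let A be a real matrix written in 3×3 block form with row blocks (s, n, w) and column blocks (s, n, w), A = [[A_ss, A_sn, 0],[A_ns, A_nn, A_nw],[0, A_wn, A_ww]], so that the (s,w) and (w,s) blocks are zero. Let H be an orthogonal matrix of the size of the s row block and set H_s = diag(H, I, I). Let R_s = [[R_ss, R_sn, 0],[0, I, 0],[0, 0, I]] with R_ss invertible (so R_s is invertible). Then the matrix B = H_sᵀ A R_s⁻¹ satisfies B_sw = 0, B_ws = 0, B_nw = A_nw, B_wn = A_wn, and B_ww = A_ww; that is, the block Householder factorization of the separator s introduces no fill-in in any block involving w. -/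
/-!
With `s` split off from `(n, w)`, the vanishing of `A_sw` and `A_ws` makes `A` a block matrix
`[[A_ss, [A_sn, 0]], [[A_ns; 0], D]]`. Left multiplication by `H_sᵀ = diag(Hᵀ, I)` only touches the
`s` rows, and `R_s⁻¹ = [[R_ss⁻¹, [-R_ss⁻¹ R_sn, 0]], [0, I]]` only adds combinations of the `s`
columns to the `n` columns. Hence `B = [[Hᵀ A_ss R_ss⁻¹, [Hᵀ (A_sn - A_ss R_ss⁻¹ R_sn), 0]],
[[A_ns R_ss⁻¹; 0], D - diag(A_ns R_ss⁻¹ R_sn, 0)]]`, whose blocks involving `w` are those of `A`.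
-/

open Matrix

namespace Matrix

variable {K : Type*} {l₁ m₁ m₂ m₃ n₁ n₂ n₃ : Type*}

theorem eq_fromBlocks_fromCols_zero_fromRows_zero [Zero K]
    (A : Matrix (m₁ ⊕ m₂ ⊕ m₃) (n₁ ⊕ n₂ ⊕ n₃) K)
    (h₁₃ : ∀ i j, A (Sum.inl i) (Sum.inr (Sum.inr j)) = 0)
    (h₃₁ : ∀ i j, A (Sum.inr (Sum.inr i)) (Sum.inl j) = 0) :
    A = fromBlocks A.toBlocks₁₁ (fromCols A.toBlocks₁₂.toCols₁ 0)
      (fromRows A.toBlocks₂₁.toRows₁ 0) A.toBlocks₂₂ := by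
  ext (i | i | i) (j | j | j) <;> simp [toBlocks₁₁, toBlocks₁₂, toBlocks₂₁, toBlocks₂₂, h₁₃, h₃₁]

variable [Fintype m₁] [Fintype m₂] [Fintype m₃] [Fintype n₁] [Fintype n₂] [Fintype n₃]

theorem inv_fromBlocks_fromCols_zero_one [CommRing K] [DecidableEq n₁] [DecidableEq n₂]
    [DecidableEq n₃] (R : Matrix n₁ n₁ K) (C : Matrix n₁ n₂ K) (hR : IsUnit R.det) :
    (fromBlocks R (fromCols C 0) 0 (1 : Matrix (n₂ ⊕ n₃) (n₂ ⊕ n₃) K))⁻¹ =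
      fromBlocks R⁻¹ (fromCols (-(R⁻¹ * C)) 0) 0 1 := by
  rw [inv_fromBlocks_zero₂₁_of_isUnit_iff _ _ _ (by simp [isUnit_iff_isUnit_det, hR])]
  simp [mul_fromCols, fromCols_neg]

theorem fromBlocks_one_mul_fromBlocks_mul_fromBlocks [Semiring K] [DecidableEq m₂]
    [DecidableEq m₃] [DecidableEq n₂] [DecidableEq n₃]
    (L : Matrix l₁ m₁ K) (A₁₁ : Matrix m₁ n₁ K) (A₁₂ : Matrix m₁ n₂ K) (A₂₁ : Matrix m₂ n₁ K)
    (D : Matrix (m₂ ⊕ m₃) (n₂ ⊕ n₃) K) (Q : Matrix n₁ n₁ K) (N : Matrix n₁ n₂ K) :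
    fromBlocks L 0 0 (1 : Matrix (m₂ ⊕ m₃) (m₂ ⊕ m₃) K) *
        fromBlocks A₁₁ (fromCols A₁₂ (0 : Matrix m₁ n₃ K)) (fromRows A₂₁ (0 : Matrix m₃ n₁ K)) D *
        fromBlocks Q (fromCols N 0) 0 (1 : Matrix (n₂ ⊕ n₃) (n₂ ⊕ n₃) K) =
      fromBlocks (L * A₁₁ * Q) (fromCols (L * (A₁₁ * N + A₁₂)) 0) (fromRows (A₂₁ * Q) 0)
        (fromBlocks (A₂₁ * N) 0 0 0 + D) := by
  simp only [fromBlocks_multiply, mul_fromCols, fromRows_mul, Matrix.mul_zero, Matrix.zero_mul,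
    Matrix.mul_one, Matrix.one_mul, add_zero, zero_add, Matrix.mul_add, Matrix.mul_assoc]
  congr 1
  · ext i (j | j) <;> simp [add_comm]
  · ext (i | i) (j | j) <;> simp

end Matrix

theorem block_householder_no_fill_in_general
    (ms mn mw ns nn nw : ℕ)
    (A : Matrix (Fin ms ⊕ (Fin mn ⊕ Fin mw)) (Fin ns ⊕ (Fin nn ⊕ Fin nw)) ℝ)
    (hAsw : ∀ (i : Fin ms) (j : Fin nw), A (Sum.inl i) (Sum.inr (Sum.inr j)) = 0)
    (hAws : ∀ (i : Fin mw) (j : Fin ns), A (Sum.inr (Sum.inr i)) (Sum.inl j) = 0)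
    (H : Matrix (Fin ms) (Fin ms) ℝ)
    (Hs : Matrix (Fin ms ⊕ (Fin mn ⊕ Fin mw)) (Fin ms ⊕ (Fin mn ⊕ Fin mw)) ℝ)
    (hHs : Hs = fromBlocks H 0 0 (1 : Matrix (Fin mn ⊕ Fin mw) (Fin mn ⊕ Fin mw) ℝ))
    (Rss : Matrix (Fin ns) (Fin ns) ℝ) (hRss : IsUnit Rss.det)
    (Rsn : Matrix (Fin ns) (Fin nn) ℝ)
    (Rs : Matrix (Fin ns ⊕ (Fin nn ⊕ Fin nw)) (Fin ns ⊕ (Fin nn ⊕ Fin nw)) ℝ)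
    (hRs : Rs = fromBlocks Rss (fromCols Rsn 0) 0
      (1 : Matrix (Fin nn ⊕ Fin nw) (Fin nn ⊕ Fin nw) ℝ))
    (B : Matrix (Fin ms ⊕ (Fin mn ⊕ Fin mw)) (Fin ns ⊕ (Fin nn ⊕ Fin nw)) ℝ)
    (hB : B = Hsᵀ * A * Rs⁻¹) :
    IsUnit Rs.det ∧
    (∀ (i : Fin ms) (j : Fin nw), B (Sum.inl i) (Sum.inr (Sum.inr j)) = 0) ∧
    (∀ (i : Fin mw) (j : Fin ns), B (Sum.inr (Sum.inr i)) (Sum.inl j) = 0) ∧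
    (∀ (i : Fin mn) (j : Fin nw),
      B (Sum.inr (Sum.inl i)) (Sum.inr (Sum.inr j)) = A (Sum.inr (Sum.inl i)) (Sum.inr (Sum.inr j))) ∧
    (∀ (i : Fin mw) (j : Fin nn),
      B (Sum.inr (Sum.inr i)) (Sum.inr (Sum.inl j)) = A (Sum.inr (Sum.inr i)) (Sum.inr (Sum.inl j))) ∧
    (∀ (i : Fin mw) (j : Fin nw),
      B (Sum.inr (Sum.inr i)) (Sum.inr (Sum.inr j)) = A (Sum.inr (Sum.inr i)) (Sum.inr (Sum.inr j))) := by
  subst hHs hRs hB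
  refine ⟨by simpa [det_fromBlocks_zero₂₁] using hRss, ?_⟩
  simp only [inv_fromBlocks_fromCols_zero_one Rss Rsn hRss, fromBlocks_transpose, transpose_zero,
    transpose_one]
  rw [eq_fromBlocks_fromCols_zero_fromRows_zero A hAsw hAws,
    fromBlocks_one_mul_fromBlocks_mul_fromBlocks]
  refine ⟨?_, ?_, ?_, ?_, ?_⟩ <;> intro i j <;> simp

/-- Block Householder factorization of a separator `s` introduces no fill-in in any block
involving `w`: if the `(s,w)` and `(w,s)` blocks of `A` are zero, `H` is orthogonal,
`H_s = diag(H, I, I)`, and `R_s = [[R_ss, R_sn, 0], [0, I, 0], [0, 0, I]]` with `R_ss`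
invertible, then `B = H_sᵀ A R_s⁻¹` has `B_sw = 0`, `B_ws = 0`, `B_nw = A_nw`,
`B_wn = A_wn`, `B_ww = A_ww`. -/
theorem block_householder_no_fill_in
    (ms mn mw ns nn nw : ℕ)
    (A : Matrix (Fin ms ⊕ (Fin mn ⊕ Fin mw)) (Fin ns ⊕ (Fin nn ⊕ Fin nw)) ℝ)
    (hAsw : ∀ (i : Fin ms) (j : Fin nw), A (Sum.inl i) (Sum.inr (Sum.inr j)) = 0)
    (hAws : ∀ (i : Fin mw) (j : Fin ns), A (Sum.inr (Sum.inr i)) (Sum.inl j) = 0)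
    (H : Matrix (Fin ms) (Fin ms) ℝ) (hH : Hᵀ * H = 1)
    (Hs : Matrix (Fin ms ⊕ (Fin mn ⊕ Fin mw)) (Fin ms ⊕ (Fin mn ⊕ Fin mw)) ℝ)
    (hHs : Hs = fromBlocks H 0 0 (1 : Matrix (Fin mn ⊕ Fin mw) (Fin mn ⊕ Fin mw) ℝ))
    (Rss : Matrix (Fin ns) (Fin ns) ℝ) (hRss : IsUnit Rss.det)
    (Rsn : Matrix (Fin ns) (Fin nn) ℝ)
    (Rs : Matrix (Fin ns ⊕ (Fin nn ⊕ Fin nw)) (Fin ns ⊕ (Fin nn ⊕ Fin nw)) ℝ)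
    (hRs : Rs = fromBlocks Rss (fromCols Rsn 0) 0
      (1 : Matrix (Fin nn ⊕ Fin nw) (Fin nn ⊕ Fin nw) ℝ))
    (B : Matrix (Fin ms ⊕ (Fin mn ⊕ Fin mw)) (Fin ns ⊕ (Fin nn ⊕ Fin nw)) ℝ)
    (hB : B = Hsᵀ * A * Rs⁻¹) :
    IsUnit Rs.det ∧
    (∀ (i : Fin ms) (j : Fin nw), B (Sum.inl i) (Sum.inr (Sum.inr j)) = 0) ∧
    (∀ (i : Fin mw) (j : Fin ns), B (Sum.inr (Sum.inr i)) (Sum.inl j) = 0) ∧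
    (∀ (i : Fin mn) (j : Fin nw),
      B (Sum.inr (Sum.inl i)) (Sum.inr (Sum.inr j)) = A (Sum.inr (Sum.inl i)) (Sum.inr (Sum.inr j))) ∧
    (∀ (i : Fin mw) (j : Fin nn),
      B (Sum.inr (Sum.inr i)) (Sum.inr (Sum.inl j)) = A (Sum.inr (Sum.inr i)) (Sum.inr (Sum.inl j))) ∧
    (∀ (i : Fin mw) (j : Fin nw),
      B (Sum.inr (Sum.inr i)) (Sum.inr (Sum.inr j)) = A (Sum.inr (Sum.inr i)) (Sum.inr (Sum.inr j))) :=
  block_householder_no_fill_in_general ms mn mw ns nn nw A hAsw hAws H Hs hHs Rss hRss Rsn Rs hRs B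
    hB
end

section
/- Let A_p = [[I_c, B],[C, D]] be a real block matrix with B of size c×n, C of size n×c, and D of size n×n. Suppose Q is an orthogonal c×c matrix such that the c×2n matrix [Cᵀ, B] equals Q·W, where the first f rows of W (the fine block) have spectral norm at most ε. Set Q_p = diag(Q, I_n). Then: (i) Q_pᵀ A_p Q_p = [[I_c, QᵀB],[CQ, D]]; (ii) the submatrix of QᵀB consisting of its first f rows and the submatrix of CQ consisting of its first f columns each have spectral norm at most ε; and (iii) the matrix obtained from Q_pᵀ A_p Q_p by replacing these two submatrices with zero differs from Q_pᵀ A_p Q_p by a matrix of spectral norm at most 2ε. -/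
/-!
Orthogonality of `Q` gives `W = Qᵀ [Cᵀ, B] = [(C Q)ᵀ, Qᵀ B]`, so the fine rows of `Qᵀ B` and the
transposed fine columns of `C Q` are column blocks of the fine rows of `W`. Extracting a column
block is multiplication by a coordinate selection `[I; 0]`, a contraction, which gives (ii). The
perturbation in (iii) consists of the two off-diagonal blocks, each a zero-padding of one of these
pieces; zero-padding does not change the Gram matrix `Aᴴ A`, hence, by the C⋆-identity, not the
spectral norm either, and the triangle inequality gives `2ε`.
-/

open Matrix

/-- The spectral norm (ℓ² → ℓ² operator norm) of a real matrix. -/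
noncomputable def specNorm {m n : Type*} [Fintype m] [Fintype n] [DecidableEq n]
    (A : Matrix m n ℝ) : ℝ :=
  ‖LinearMap.toContinuousLinearMap (Matrix.toEuclideanLin A)‖

namespace Matrix

section Blocks

variable {R : Type*} {m m₁ m₂ n n₁ n₂ : Type*}

theorem toRows₁_fromCols (A : Matrix (m₁ ⊕ m₂) n₁ R) (B : Matrix (m₁ ⊕ m₂) n₂ R) :
    (fromCols A B).toRows₁ = fromCols A.toRows₁ B.toRows₁ := by
  ext i (j | j) <;> rfl

theorem toRows₁_transpose (A : Matrix m (n₁ ⊕ n₂) R) : Aᵀ.toRows₁ = A.toCols₁ᵀ := rfl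

theorem fromBlocks_sub_fromBlocks_toRows₂_toCols₂ [AddGroup R] (A : Matrix (m₁ ⊕ m₂) (n₁ ⊕ n₂) R)
    (B : Matrix (m₁ ⊕ m₂) n R) (C : Matrix m (n₁ ⊕ n₂) R) (D : Matrix m n R) :
    fromBlocks A B C D - fromBlocks A (fromRows 0 B.toRows₂) (fromCols 0 C.toCols₂) D =
      fromBlocks 0 (fromRows B.toRows₁ 0) (fromCols C.toCols₁ 0) 0 := by
  ext ((i | i) | i) ((j | j) | j) <;> simp [toRows₁, toCols₁]

end Blocks

open scoped Matrix.Norms.L2Operator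

variable {𝕜 : Type*} [RCLike 𝕜] {m m' n n' : Type*}
  [Fintype m] [Fintype m'] [Fintype n] [Fintype n'] [DecidableEq n] [DecidableEq n']

theorem l2_opNorm_one_le : ‖(1 : Matrix n n 𝕜)‖ ≤ 1 := by
  rw [← diagonal_one, l2_opNorm_diagonal]
  exact (pi_norm_le_iff_of_nonneg zero_le_one).2 fun _ => by simp

theorem l2_opNorm_transpose [DecidableEq m] (A : Matrix m n ℝ) : ‖Aᵀ‖ = ‖A‖ := by
  rw [← conjTranspose_eq_transpose_of_trivial, l2_opNorm_conjTranspose]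

theorem l2_opNorm_eq_of_conjTranspose_mul_self_eq {A : Matrix m n 𝕜} {B : Matrix m' n 𝕜}
    (h : Aᴴ * A = Bᴴ * B) : ‖A‖ = ‖B‖ := by
  have h' := l2_opNorm_conjTranspose_mul_self A
  rw [h, l2_opNorm_conjTranspose_mul_self] at h'
  exact (mul_self_inj (norm_nonneg _) (norm_nonneg _)).1 h'.symm

theorem l2_opNorm_fromRows_zero_right (A : Matrix m n 𝕜) :
    ‖fromRows A (0 : Matrix m' n 𝕜)‖ = ‖A‖ :=
  l2_opNorm_eq_of_conjTranspose_mul_self_eq <| by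
    rw [conjTranspose_fromRows_eq_fromCols_conjTranspose, fromCols_mul_fromRows]; simp

theorem l2_opNorm_fromRows_zero_left (A : Matrix m n 𝕜) :
    ‖fromRows (0 : Matrix m' n 𝕜) A‖ = ‖A‖ :=
  l2_opNorm_eq_of_conjTranspose_mul_self_eq <| by
    rw [conjTranspose_fromRows_eq_fromCols_conjTranspose, fromCols_mul_fromRows]; simp

theorem l2_opNorm_fromCols_zero_right [DecidableEq m] (A : Matrix m n 𝕜) :
    ‖fromCols A (0 : Matrix m n' 𝕜)‖ = ‖A‖ := by
  rw [← l2_opNorm_conjTranspose, conjTranspose_fromCols_eq_fromRows_conjTranspose,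
    conjTranspose_zero, l2_opNorm_fromRows_zero_right, l2_opNorm_conjTranspose]

theorem l2_opNorm_fromCols_zero_left [DecidableEq m] (A : Matrix m n 𝕜) :
    ‖fromCols (0 : Matrix m n' 𝕜) A‖ = ‖A‖ := by
  rw [← l2_opNorm_conjTranspose, conjTranspose_fromCols_eq_fromRows_conjTranspose,
    conjTranspose_zero, l2_opNorm_fromRows_zero_left, l2_opNorm_conjTranspose]

theorem l2_opNorm_fromBlocks_zero_le [DecidableEq m] [DecidableEq m'] (B : Matrix m n' 𝕜)
    (C : Matrix m' n 𝕜) : ‖fromBlocks 0 B C 0‖ ≤ ‖B‖ + ‖C‖ := by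
  have hsplit : fromBlocks 0 B C 0 = fromBlocks 0 B 0 0 + fromBlocks 0 0 C 0 := by
    simp [fromBlocks_add]
  rw [hsplit]
  refine (norm_add_le _ _).trans_eq ?_
  simp only [← fromRows_fromCols_eq_fromBlocks, fromCols_zero, l2_opNorm_fromRows_zero_left,
    l2_opNorm_fromRows_zero_right, l2_opNorm_fromCols_zero_left, l2_opNorm_fromCols_zero_right]

theorem l2_opNorm_le_fromCols_left (A : Matrix m n 𝕜) (B : Matrix m n' 𝕜) :
    ‖A‖ ≤ ‖fromCols A B‖ :=
  calc ‖A‖ = ‖fromCols A B * fromRows 1 0‖ := by rw [fromCols_mul_fromRows]; simp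
    _ ≤ ‖fromCols A B‖ * ‖fromRows (1 : Matrix n n 𝕜) (0 : Matrix n' n 𝕜)‖ := l2_opNorm_mul _ _
    _ ≤ ‖fromCols A B‖ := by
      rw [l2_opNorm_fromRows_zero_right]
      exact mul_le_of_le_one_right (norm_nonneg _) l2_opNorm_one_le

theorem l2_opNorm_le_fromCols_right (A : Matrix m n 𝕜) (B : Matrix m n' 𝕜) :
    ‖B‖ ≤ ‖fromCols A B‖ :=
  calc ‖B‖ = ‖fromCols A B * fromRows 0 1‖ := by rw [fromCols_mul_fromRows]; simp
    _ ≤ ‖fromCols A B‖ * ‖fromRows (0 : Matrix n n' 𝕜) (1 : Matrix n' n' 𝕜)‖ := l2_opNorm_mul _ _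
    _ ≤ ‖fromCols A B‖ := by
      rw [l2_opNorm_fromRows_zero_left]
      exact mul_le_of_le_one_right (norm_nonneg _) l2_opNorm_one_le

end Matrix

/-- Sparsification of an interface. The interface index set is `Fin f ⊕ Fin g`
(`c = f + g`), the first `f` indices being the fine ones. Let
`A_p = [[I, B], [C, D]]` and let `Q` be orthogonal with `[Cᵀ, B] = Q W`, where the fine
(first `f`) rows of `W` have spectral norm at most `ε`. With `Q_p = diag(Q, I)`:
(i) `Q_pᵀ A_p Q_p = [[I, QᵀB], [CQ, D]]`;
(ii) the first `f` rows of `QᵀB` and the first `f` columns of `CQ` have spectral norm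
at most `ε`;
(iii) replacing these two submatrices by zero perturbs `Q_pᵀ A_p Q_p` by at most `2ε`
in spectral norm. -/
theorem interface_sparsification
    (f g n : ℕ) (ε : ℝ)
    (B : Matrix (Fin f ⊕ Fin g) (Fin n) ℝ)
    (C : Matrix (Fin n) (Fin f ⊕ Fin g) ℝ)
    (D : Matrix (Fin n) (Fin n) ℝ)
    (Q : Matrix (Fin f ⊕ Fin g) (Fin f ⊕ Fin g) ℝ) (hQ : Qᵀ * Q = 1)
    (W : Matrix (Fin f ⊕ Fin g) (Fin n ⊕ Fin n) ℝ)
    (hW : fromCols Cᵀ B = Q * W)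
    (hfine : specNorm (W.submatrix Sum.inl id) ≤ ε) :
    (fromBlocks Q 0 0 (1 : Matrix (Fin n) (Fin n) ℝ))ᵀ *
        fromBlocks (1 : Matrix (Fin f ⊕ Fin g) (Fin f ⊕ Fin g) ℝ) B C D *
        fromBlocks Q 0 0 (1 : Matrix (Fin n) (Fin n) ℝ) =
      fromBlocks 1 (Qᵀ * B) (C * Q) D ∧
    specNorm ((Qᵀ * B).submatrix Sum.inl id) ≤ ε ∧
    specNorm ((C * Q).submatrix id Sum.inl) ≤ ε ∧
    specNorm (fromBlocks 1 (Qᵀ * B) (C * Q) D -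
        fromBlocks 1
          (fromRows (0 : Matrix (Fin f) (Fin n) ℝ) ((Qᵀ * B).submatrix Sum.inr id))
          (fromCols (0 : Matrix (Fin n) (Fin f) ℝ) ((C * Q).submatrix id Sum.inr))
          D) ≤ 2 * ε := by
  open scoped Matrix.Norms.L2Operator in
  have hW' : W = fromCols (C * Q)ᵀ (Qᵀ * B) := by
    rw [transpose_mul, ← mul_fromCols, hW, ← Matrix.mul_assoc, hQ, Matrix.one_mul]
  have hfine' : ‖fromCols (C * Q).toCols₁ᵀ (Qᵀ * B).toRows₁‖ ≤ ε := by
    rw [← toRows₁_transpose, ← toRows₁_fromCols, ← hW']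
    exact hfine
  have hB : ‖(Qᵀ * B).toRows₁‖ ≤ ε := (l2_opNorm_le_fromCols_right _ _).trans hfine'
  have hC : ‖(C * Q).toCols₁‖ ≤ ε := by
    rw [← l2_opNorm_transpose]
    exact (l2_opNorm_le_fromCols_left _ _).trans hfine'
  refine ⟨?_, hB, hC, ?_⟩
  · simp [fromBlocks_transpose, fromBlocks_multiply, hQ]
  · calc ‖_‖ = ‖fromBlocks 0 (fromRows (Qᵀ * B).toRows₁ 0) (fromCols (C * Q).toCols₁ 0) 0‖ :=
          congrArg _ (fromBlocks_sub_fromBlocks_toRows₂_toCols₂ _ _ _ _)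
      _ ≤ ‖(Qᵀ * B).toRows₁‖ + ‖(C * Q).toCols₁‖ :=
          (l2_opNorm_fromBlocks_zero_le _ _).trans_eq <| by
            rw [l2_opNorm_fromRows_zero_right, l2_opNorm_fromCols_zero_right]
      _ ≤ 2 * ε := by linarith
end
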